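/- arXiv:1207.5482 — 4 statements merged into one kernel-verified Lean document; each statement's English description precedes it below -/
import Mathlib

section
/- Let Q : ℝ → ℝ be twice continuously differentiable and periodic with period ρ > 0, and let D > 0. Let g : ℝ → ℝ be continuous and ρ-periodic with ∫₀^ρ g(z) e^{−Q(z)/D} dz = 0. Then there exists a twice continuously differentiable ρ-periodic function Ξ : ℝ → ℝ such that D Ξ''(y) − Q'(y) Ξ'(y) = −g(y) for all y ∈ ℝ. -/
/-!
With `φ = Ξ'` the equation `D Ξ'' - Q' Ξ' = -g` is the first-order linear equation
`φ' = (Q/D)' φ - g/D`, solved by the integrating factor `e^{-Q/D}`: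
`φ = e^{Q/D} (C - ∫₀^y (g/D) e^{-Q/D})`. The centering condition makes the primitive
`∫₀^y g e^{-Q/D}` periodic, hence `φ` periodic for every `C`; since `∫₀^ρ φ` is affine in `C`
with slope `∫₀^ρ e^{Q/D} > 0`, one `C` gives `∫₀^ρ φ = 0`, and then `Ξ = ∫₀^y φ` is periodic.
-/

open Real MeasureTheory

section Primitive

variable {E : Type*} [NormedAddCommGroup E] [NormedSpace ℝ E] {f : ℝ → E}

theorem Function.Periodic.primitive_of_integral_eq_zero {T : ℝ} (hper : Function.Periodic f T)
    (hf : Continuous f) (h0 : ∫ x in (0 : ℝ)..T, f x = 0) :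
    Function.Periodic (fun y => ∫ x in (0 : ℝ)..y, f x) T := fun y => by
  simp only [hper.intervalIntegral_add_eq_add 0 y hf.intervalIntegrable, zero_add, h0, add_zero]

theorem ContDiff.primitive [CompleteSpace E] {n : ℕ} (hf : ContDiff ℝ n f) (a : ℝ) :
    ContDiff ℝ (n + 1) (fun y => ∫ x in a..y, f x) := by
  have hderiv : deriv (fun y => ∫ x in a..y, f x) = f := funext (hf.continuous.deriv_integral f a)
  refine contDiff_succ_iff_deriv.mpr ⟨fun y => ?_, by simp, by rwa [hderiv]⟩
  exact (hf.continuous.integral_hasStrictDerivAt a y).hasDerivAt.differentiableAt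

end Primitive

/-- The solutions of `φ' = a' φ - b`, parametrised by `C = φ 0`. -/
noncomputable def integratingFactorSolution (a b : ℝ → ℝ) (C y : ℝ) : ℝ :=
  exp (a y) * (C - ∫ z in (0 : ℝ)..y, b z * exp (-a z))

section IntegratingFactor

variable {a a' b : ℝ → ℝ}

theorem continuous_integratingFactorSolution (ha : Continuous a) (hb : Continuous b) (C : ℝ) :
    Continuous (integratingFactorSolution a b C) := by
  unfold integratingFactorSolution
  fun_prop

theorem hasDerivAt_integratingFactorSolution (ha : ∀ y, HasDerivAt a (a' y) y)
    (hb : Continuous b) (C y : ℝ) :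
    HasDerivAt (integratingFactorSolution a b C)
      (a' y * integratingFactorSolution a b C y - b y) y := by
  have ha_cont : Continuous a := continuous_iff_continuousAt.mpr fun y => (ha y).continuousAt
  have hW : HasDerivAt (fun y => ∫ z in (0 : ℝ)..y, b z * exp (-a z)) (b y * exp (-a y)) y :=
    (by fun_prop : Continuous fun z => b z * exp (-a z)).integral_hasStrictDerivAt 0 y |>.hasDerivAt
  refine ((ha y).exp.mul (hW.const_sub C)).congr_deriv ?_
  have hexp : exp (a y) * exp (-a y) = 1 := by rw [← exp_add, add_neg_cancel, exp_zero]
  unfold integratingFactorSolution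
  linear_combination -b y * hexp

theorem contDiff_one_integratingFactorSolution (ha : ∀ y, HasDerivAt a (a' y) y)
    (ha' : Continuous a') (hb : Continuous b) (C : ℝ) :
    ContDiff ℝ 1 (integratingFactorSolution a b C) := by
  have ha_cont : Continuous a := continuous_iff_continuousAt.mpr fun y => (ha y).continuousAt
  have hderiv := fun y => hasDerivAt_integratingFactorSolution ha hb C y
  refine contDiff_one_iff_deriv.mpr ⟨fun y => (hderiv y).differentiableAt, ?_⟩
  rw [funext fun y => (hderiv y).deriv]
  exact (ha'.mul (continuous_integratingFactorSolution ha_cont hb C)).sub hb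

theorem periodic_integratingFactorSolution {T : ℝ} (ha : Continuous a) (hb : Continuous b)
    (haper : Function.Periodic a T) (hbper : Function.Periodic b T)
    (h0 : ∫ z in (0 : ℝ)..T, b z * exp (-a z) = 0) (C : ℝ) :
    Function.Periodic (integratingFactorSolution a b C) T := fun y => by
  have hW := Function.Periodic.primitive_of_integral_eq_zero
    (f := fun z => b z * exp (-a z)) (fun z => by simp only [haper z, hbper z]) (by fun_prop) h0
  simp only [integratingFactorSolution, haper y, hW y]

theorem exists_integral_integratingFactorSolution_eq_zero (ha : Continuous a) (hb : Continuous b)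
    {T : ℝ} (hT : 0 < T) : ∃ C, ∫ y in (0 : ℝ)..T, integratingFactorSolution a b C y = 0 := by
  have hshift : ∀ C, integratingFactorSolution a b C =
      fun y => C * exp (a y) + integratingFactorSolution a b 0 y := fun C => funext fun y => by
    simp only [integratingFactorSolution]
    ring
  have hmass : 0 < ∫ y in (0 : ℝ)..T, exp (a y) :=
    intervalIntegral.intervalIntegral_pos_of_pos
      ((continuous_exp.comp ha).intervalIntegrable 0 T) (fun y => exp_pos _) hT
  refine ⟨-(∫ y in (0 : ℝ)..T, integratingFactorSolution a b 0 y) / ∫ y in (0 : ℝ)..T, exp (a y),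
    ?_⟩
  have hexp_int : ∀ c : ℝ, IntervalIntegrable (fun y => c * exp (a y)) volume 0 T := fun c =>
    (continuous_const.mul (continuous_exp.comp ha)).intervalIntegrable 0 T
  rw [hshift, intervalIntegral.integral_add (hexp_int _)
      ((continuous_integratingFactorSolution ha hb 0).intervalIntegrable 0 T),
    intervalIntegral.integral_const_mul, div_mul_cancel₀ _ hmass.ne', neg_add_cancel]

end IntegratingFactor

/-- One-dimensional Fredholm-alternative solvability of the auxiliary Poisson
equation: if `g` is continuous, `ρ`-periodic and centered with respect to the
Gibbs measure `e^{-Q/D} dy`, then there is a `C²` `ρ`-periodic `Ξ` with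
`D Ξ''(y) - Q'(y) Ξ'(y) = -g(y)` for all `y`. -/
theorem poisson_equation_solvable
    (Q : ℝ → ℝ) (ρ D : ℝ) (hQ : ContDiff ℝ 2 Q) (hQper : Function.Periodic Q ρ)
    (hρ : 0 < ρ) (hD : 0 < D)
    (g : ℝ → ℝ) (hg : Continuous g) (hgper : Function.Periodic g ρ)
    (hcentered : ∫ z in (0:ℝ)..ρ, g z * Real.exp (-Q z / D) = 0) :
    ∃ Ξ : ℝ → ℝ, ContDiff ℝ 2 Ξ ∧ Function.Periodic Ξ ρ ∧
      ∀ y : ℝ, D * deriv (deriv Ξ) y - deriv Q y * deriv Ξ y = -g y := by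
  have hQD : ∀ y, HasDerivAt (fun y => Q y / D) (deriv Q y / D) y := fun y =>
    ((hQ.differentiable two_ne_zero y).hasDerivAt).div_const D
  have hQD_cont : Continuous fun y => Q y / D := hQ.continuous.div_const D
  have hgD : Continuous fun y => g y / D := hg.div_const D
  have hcenteredD : ∫ z in (0 : ℝ)..ρ, g z / D * exp (-(Q z / D)) = 0 := by
    simp only [div_mul_eq_mul_div, ← neg_div, intervalIntegral.integral_div, hcentered, zero_div]
  obtain ⟨C, hC⟩ := exists_integral_integratingFactorSolution_eq_zero hQD_cont hgD hρ
  set φ := integratingFactorSolution (fun y => Q y / D) (fun y => g y / D) C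
  have hφ_cont : Continuous φ := continuous_integratingFactorSolution hQD_cont hgD C
  have hφper : Function.Periodic φ ρ :=
    periodic_integratingFactorSolution hQD_cont hgD (fun y => by simp only [hQper y])
      (fun y => by simp only [hgper y]) hcenteredD C
  refine ⟨fun y => ∫ t in (0 : ℝ)..y, φ t,
    (contDiff_one_integratingFactorSolution hQD ((hQ.continuous_deriv one_le_two).div_const D)
      hgD C).primitive 0,
    hφper.primitive_of_integral_eq_zero hφ_cont hC, fun y => ?_⟩
  rw [funext (hφ_cont.deriv_integral φ 0), (hasDerivAt_integratingFactorSolution hQD hgD C y).deriv]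
  field_simp
  ring
end

section
/- Let g : ℝ → ℝ be continuously differentiable, let T > 0, and let x : [0, T] → ℝ solve x'(t) = g(x(t)) with g(x(t)) ≠ 0 for all t ∈ [0, T]. Let Φ solve Φ'(t) = g'(x(t)) Φ(t), Φ(0) = 1. Then (Φ(T) / g(x(T)))² · ∫₀^T Φ(s)^{−2} ds = ∫_{x(0)}^{x(T)} dy / g(y)³. In particular, taking g(x) = V'(x)/C and multiplying by the diffusion coefficient σ̄² = 2D/C with C = ⟨e^{−Q/D}⟩⟨e^{Q/D}⟩ yields the limiting variance 2D C² ∫_{x(0)}^{x(T)} dz / (V'(z))³ of Theorem 5.3. -/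
/-!
Along an orbit of `x' = g(x)` the time derivative `g(x(t))` itself solves the variational
equation, so `Φ(t) = g(x(t)) / g(x(0))` and `Φ(T)/g(x(T)) = 1/g(x(0))`. The identity then
reduces to `∫₀^T g(x(s))⁻² ds = ∫_{x(0)}^{x(T)} dy / g(y)³`, the substitution `y = x(s)`,
`dy = g(x(s)) ds`.
-/

open Set

section Orbit

variable {g x Φ : ℝ → ℝ} {a b : ℝ}

theorem hasDerivAt_comp_orbit (hg : Differentiable ℝ g) {t : ℝ}
    (hx : HasDerivAt x (g (x t)) t) :
    HasDerivAt (fun s => g (x s)) (deriv g (x t) * g (x t)) t :=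
  (hg (x t)).hasDerivAt.comp t hx

theorem variational_div_orbit_eq (hg : Differentiable ℝ g)
    (hx : ∀ t ∈ Icc a b, HasDerivAt x (g (x t)) t)
    (hne : ∀ t ∈ Icc a b, g (x t) ≠ 0)
    (hΦ : ∀ t ∈ Icc a b, HasDerivAt Φ (deriv g (x t) * Φ t) t) :
    ∀ t ∈ Icc a b, Φ t / g (x t) = Φ a / g (x a) := by
  have hratio : ∀ t ∈ Icc a b, HasDerivAt (fun s => Φ s / g (x s)) 0 t := by
    intro t ht
    exact ((hΦ t ht).div (hasDerivAt_comp_orbit hg (hx t ht)) (hne t ht)).congr_deriv (by ring)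
  exact constant_of_has_deriv_right_zero
    (fun t ht => (hratio t ht).continuousAt.continuousWithinAt)
    (fun t ht => (hratio t (Ico_subset_Icc_self ht)).hasDerivWithinAt)

theorem integral_inv_sq_comp_orbit (hg : Continuous g) (hab : a ≤ b)
    (hx : ∀ t ∈ Icc a b, HasDerivAt x (g (x t)) t)
    (hne : ∀ t ∈ Icc a b, g (x t) ≠ 0) :
    ∫ s in a..b, ((g (x s)) ^ 2)⁻¹ = ∫ y in x a..x b, 1 / (g y) ^ 3 := by
  have hxc : ContinuousOn x (Icc a b) :=
    fun t ht => (hx t ht).continuousAt.continuousWithinAt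
  calc ∫ s in a..b, ((g (x s)) ^ 2)⁻¹
      = ∫ s in a..b, ((fun y => 1 / (g y) ^ 3) ∘ x) s * g (x s) := by
        refine intervalIntegral.integral_congr fun s hs => ?_
        rw [uIcc_of_le hab] at hs
        have hgs := hne s hs
        simp only [Function.comp_apply]
        field_simp
    _ = ∫ y in x a..x b, 1 / (g y) ^ 3 := by
        refine intervalIntegral.integral_comp_mul_deriv'' (by rwa [uIcc_of_le hab])
          (fun t ht => ?_) (by rw [uIcc_of_le hab]; exact hg.comp_continuousOn hxc) ?_
        · rw [min_eq_left hab, max_eq_right hab] at ht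
          exact (hx t (Ioo_subset_Icc_self ht)).hasDerivWithinAt
        · rw [uIcc_of_le hab]
          rintro _ ⟨t, ht, rfl⟩
          exact continuousWithinAt_const.div (hg.pow 3).continuousWithinAt
            (pow_ne_zero 3 (hne t ht))

theorem sq_div_orbit_mul_integral_inv_sq_eq (hg : Differentiable ℝ g) (hab : a ≤ b)
    (hx : ∀ t ∈ Icc a b, HasDerivAt x (g (x t)) t)
    (hne : ∀ t ∈ Icc a b, g (x t) ≠ 0)
    (hΦ : ∀ t ∈ Icc a b, HasDerivAt Φ (deriv g (x t) * Φ t) t) (hΦa : Φ a ≠ 0) :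
    (Φ b / g (x b)) ^ 2 * ∫ s in a..b, ((Φ s) ^ 2)⁻¹ = ∫ y in x a..x b, 1 / (g y) ^ 3 := by
  have hratio := variational_div_orbit_eq hg hx hne hΦ
  have hga : g (x a) ≠ 0 := hne a (left_mem_Icc.2 hab)
  have hinv : ∀ s ∈ uIcc a b, ((Φ s) ^ 2)⁻¹ = (g (x a) / Φ a) ^ 2 * ((g (x s)) ^ 2)⁻¹ := by
    intro s hs
    rw [uIcc_of_le hab] at hs
    have hgs := hne s hs
    have hΦs : Φ s = Φ a / g (x a) * g (x s) := by
      rw [← hratio s hs]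
      field_simp
    rw [hΦs]
    field_simp
  rw [hratio b (right_mem_Icc.2 hab), intervalIntegral.integral_congr hinv,
    intervalIntegral.integral_const_mul, integral_inv_sq_comp_orbit hg.continuous hab hx hne]
  field_simp

end Orbit

theorem integral_one_div_div_const_pow_three (f : ℝ → ℝ) (C a b : ℝ) :
    ∫ y in a..b, 1 / (f y / C) ^ 3 = C ^ 3 * ∫ y in a..b, 1 / (f y) ^ 3 := by
  rw [← intervalIntegral.integral_const_mul]
  congr 1 with y
  rw [div_pow, one_div_div]
  ring

/-- The deterministic integral identity behind the limiting variance of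
Theorem 5.3: with `x' = g(x)`, `g(x(t)) ≠ 0` on `[0,T]`, and `Φ` the solution of
the variational equation `Φ' = g'(x(t)) Φ`, `Φ(0) = 1`, one has
`(Φ(T)/g(x(T)))² ∫₀^T Φ(s)⁻² ds = ∫_{x(0)}^{x(T)} dy / g(y)³`. In particular,
for `g = V'/C` multiplying by `σ̄² = 2D/C` yields
`2 D C² ∫_{x(0)}^{x(T)} dz/(V'(z))³`. -/
theorem limiting_variance_integral_identity
    (g : ℝ → ℝ) (hg : ContDiff ℝ 1 g) (T : ℝ) (hT : 0 < T)
    (x : ℝ → ℝ) (hx : ∀ t ∈ Set.Icc (0:ℝ) T, HasDerivAt x (g (x t)) t)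
    (hne : ∀ t ∈ Set.Icc (0:ℝ) T, g (x t) ≠ 0)
    (Φ : ℝ → ℝ) (hΦ0 : Φ 0 = 1)
    (hΦ : ∀ t ∈ Set.Icc (0:ℝ) T, HasDerivAt Φ (deriv g (x t) * Φ t) t) :
    ((Φ T / g (x T)) ^ 2 * ∫ s in (0:ℝ)..T, ((Φ s) ^ 2)⁻¹
        = ∫ y in (x 0)..(x T), 1 / (g y) ^ 3) ∧
      ∀ (V : ℝ → ℝ) (D C : ℝ), 0 < C → (∀ w, g w = deriv V w / C) →
        (2 * D / C) * ((Φ T / g (x T)) ^ 2 * ∫ s in (0:ℝ)..T, ((Φ s) ^ 2)⁻¹)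
          = 2 * D * C ^ 2 * ∫ z in (x 0)..(x T), 1 / (deriv V z) ^ 3 := by
  have key := sq_div_orbit_mul_integral_inv_sq_eq (hg.differentiable one_ne_zero) hT.le hx hne
    hΦ (by rw [hΦ0]; exact one_ne_zero)
  refine ⟨key, fun V D C hC hV => ?_⟩
  rw [key, funext hV, integral_one_div_div_const_pow_three]
  field_simp
end

section
/- Let S > 0, 0 < T < S, v > 0, and for each ε > 0 let h^ε : [0, S] → ℝ be continuous, with h^ε converging uniformly on [0, S] as ε → 0⁺ to a continuous function h. Define γ^ε(t) = (t − T) v + ε h^ε(t) and τ^ε = inf { t ∈ [0, S] : γ^ε(t) ≥ 0 }. Then for all sufficiently small ε > 0 the set defining τ^ε is nonempty, and lim_{ε → 0⁺} (τ^ε − T)/ε = −h(T)/v. -/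
/-!
Writing `t = T + ε x`, the crossing condition becomes `x v + h^ε(T + ε x) ≥ 0`. Uniform
convergence and continuity of `h` at `T` give `h^ε(t) → h(T)` jointly as `(ε, t) → (0⁺, T)`.
Hence for `x > -h(T)/v` the point `T + ε x` eventually lies in the crossing set, while for
`x < -h(T)/v` no earlier time does: near `T` by the same joint limit, and at distance `≥ δ`
before `T` because `(t - T) v ≤ -δ v` dominates `ε h^ε(t)`, which is uniformly `O(ε)`.
-/

open Filter Topology Set

theorem TendstoUniformlyOn.tendsto_prod_nhdsWithin {ι α β : Type*} [TopologicalSpace α]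
    [UniformSpace β] {F : ι → α → β} {f : α → β} {p : Filter ι} {s : Set α} {x : α}
    (h : TendstoUniformlyOn F f p s) (hf : ContinuousWithinAt f s x) :
    Tendsto (fun q : ι × α => F q.1 q.2) (p ×ˢ 𝓝[s] x) (𝓝 (f x)) :=
  tendsto_comp_of_locally_uniform_limit_within (F := fun q => F q.1) hf tendsto_snd
    fun u hu => ⟨s, self_mem_nhdsWithin, tendsto_fst.eventually (h u hu)⟩

theorem tendsto_of_forall_eventually_ge_of_forall_eventually_le {α β : Type*} [LinearOrder β]
    [TopologicalSpace β] [OrderTopology β] [DenselyOrdered β] {l : Filter α} {x : α → β}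
    {L : β}
    (hlow : ∀ a < L, ∀ᶠ e in l, a ≤ x e) (hup : ∀ b > L, ∀ᶠ e in l, x e ≤ b) :
    Tendsto x l (𝓝 L) := by
  refine tendsto_order.2 ⟨fun a ha => ?_, fun b hb => ?_⟩
  · obtain ⟨a', ha', ha'L⟩ := exists_between ha
    exact (hlow a' ha'L).mono fun e he => ha'.trans_le he
  · obtain ⟨b', hLb', hb'⟩ := exists_between hb
    exact (hup b' hLb').mono fun e he => he.trans_lt hb'

def crossingSet (S T v ε : ℝ) (g : ℝ → ℝ) : Set ℝ :=
  {t | t ∈ Icc 0 S ∧ 0 ≤ (t - T) * v + ε * g t}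

section Crossing

variable {S T v : ℝ} {h : ℝ → ℝ → ℝ} {hlim : ℝ → ℝ}

theorem eventually_add_mul_mem_crossingSet (hv : 0 < v) (hT : T ∈ Ioo 0 S)
    (hunif : TendstoUniformlyOn h hlim (𝓝[>] 0) (Icc 0 S))
    (hcont : ContinuousWithinAt hlim (Icc 0 S) T) {b : ℝ} (hb : -hlim T / v < b) :
    ∀ᶠ ε in 𝓝[>] 0, T + ε * b ∈ crossingSet S T v ε (h ε) := by
  have hto : Tendsto (fun ε => T + ε * b) (𝓝[>] 0) (𝓝 T) :=
    tendsto_nhdsWithin_of_tendsto_nhds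
      (by simpa using ((continuous_mul_const b).tendsto 0).const_add T)
  have hIcc := hto.eventually (Icc_mem_nhds hT.1 hT.2)
  have hg : Tendsto (fun ε => T + ε * b) (𝓝[>] 0) (𝓝[Icc 0 S] T) :=
    tendsto_nhdsWithin_iff.2 ⟨hto, hIcc⟩
  have hbv : -(b * v) < hlim T := by rw [div_lt_iff₀ hv] at hb; linarith
  filter_upwards [hIcc,
    (hunif.tendsto_comp hcont hg).eventually_const_lt hbv, self_mem_nhdsWithin]
    with ε hmem hval (hε : 0 < ε)
  refine ⟨hmem, ?_⟩
  nlinarith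

theorem eventually_forall_lt_zero_of_le_sub (hv : 0 < v)
    (hunif : TendstoUniformlyOn h hlim (𝓝[>] 0) (Icc 0 S))
    (hcont : ContinuousOn hlim (Icc 0 S)) {δ : ℝ} (hδ : 0 < δ) :
    ∀ᶠ ε in 𝓝[>] 0, ∀ t ∈ Icc 0 S, t ≤ T - δ → (t - T) * v + ε * h ε t < 0 := by
  obtain ⟨M, hM⟩ := isCompact_Icc.exists_bound_of_continuousOn hcont
  have hle : ∀ t ∈ Icc 0 S, hlim t ≤ |M| :=
    fun t ht => (le_abs_self _).trans ((hM t ht).trans (le_abs_self M))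
  filter_upwards [hunif.eventually_forall_lt (lt_add_one |M|) hle,
    Ioo_mem_nhdsGT (div_pos (mul_pos hδ hv) (by positivity : (0 : ℝ) < |M| + 1))]
    with ε hbound hε t ht htδ
  have hεM : ε * (|M| + 1) < δ * v := (lt_div_iff₀ (by positivity)).1 hε.2
  nlinarith [hbound t ht, hε.1]

theorem exists_eventually_forall_lt_zero_of_abs_sub_lt (hv : 0 < v)
    (hunif : TendstoUniformlyOn h hlim (𝓝[>] 0) (Icc 0 S))
    (hcont : ContinuousWithinAt hlim (Icc 0 S) T) {a : ℝ} (ha : a < -hlim T / v) :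
    ∃ δ > 0, ∀ᶠ ε in 𝓝[>] 0, ∀ t ∈ Icc 0 S, |t - T| < δ → t < T + ε * a →
      (t - T) * v + ε * h ε t < 0 := by
  have hav : hlim T < -(a * v) := by rw [lt_div_iff₀ hv] at ha; linarith
  obtain ⟨P, hP, Q, hQ, hPQ⟩ :=
    eventually_prod_iff.1 ((hunif.tendsto_prod_nhdsWithin hcont).eventually_lt_const hav)
  obtain ⟨δ, hδ, hball⟩ := Metric.mem_nhdsWithin_iff.1 hQ
  refine ⟨δ, hδ, ?_⟩
  filter_upwards [hP, self_mem_nhdsWithin] with ε hε (hεpos : 0 < ε) t ht hnear hlt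
  have hval : h ε t < -(a * v) := hPQ hε (hball ⟨by rwa [Metric.mem_ball, Real.dist_eq], ht⟩)
  nlinarith

theorem eventually_add_mul_le_of_mem_crossingSet (hv : 0 < v)
    (hunif : TendstoUniformlyOn h hlim (𝓝[>] 0) (Icc 0 S))
    (hcont : ContinuousOn hlim (Icc 0 S)) (hT : T ∈ Icc 0 S) {a : ℝ} (ha : a < -hlim T / v) :
    ∀ᶠ ε in 𝓝[>] 0, ∀ t ∈ crossingSet S T v ε (h ε), T + ε * a ≤ t := by
  obtain ⟨δ, hδ, hnear⟩ :=
    exists_eventually_forall_lt_zero_of_abs_sub_lt hv hunif (hcont T hT) ha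
  have hsmall : ∀ᶠ ε in 𝓝[>] (0 : ℝ), ε * a < δ :=
    (((continuous_mul_const a).tendsto' 0 0 (zero_mul a)).mono_left
      nhdsWithin_le_nhds).eventually_lt_const hδ
  filter_upwards [hnear, eventually_forall_lt_zero_of_le_sub hv hunif hcont hδ, hsmall]
    with ε hnear hfar hsmall t ⟨ht, hcross⟩
  by_contra! hlt
  rcases lt_or_ge |t - T| δ with hclose | hapart
  · exact (hnear t ht hclose hlt).not_ge hcross
  · have htδ : t ≤ T - δ := by
      rcases le_abs'.1 hapart with h' | h' <;> linarith
    exact (hfar t ht htδ).not_ge hcross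

end Crossing

theorem exit_time_correction_skeleton_general
    (S T v : ℝ) (hT : 0 < T) (hTS : T < S) (hv : 0 < v)
    (h : ℝ → ℝ → ℝ)
    (hlim : ℝ → ℝ) (hlimcont : ContinuousOn hlim (Set.Icc 0 S))
    (hunif : TendstoUniformlyOn h hlim (𝓝[>] (0:ℝ)) (Set.Icc 0 S))
    (τ : ℝ → ℝ)
    (hτ : ∀ ε > (0:ℝ),
      τ ε = sInf {t | t ∈ Set.Icc (0:ℝ) S ∧ 0 ≤ (t - T) * v + ε * h ε t}) :
    (∃ ε₀ > (0:ℝ), ∀ ε ∈ Set.Ioo (0:ℝ) ε₀,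
        {t | t ∈ Set.Icc (0:ℝ) S ∧ 0 ≤ (t - T) * v + ε * h ε t}.Nonempty) ∧
      Tendsto (fun ε => (τ ε - T) / ε) (𝓝[>] (0:ℝ)) (𝓝 (-hlim T / v)) := by
  have hTS' : T ∈ Ioo 0 S := ⟨hT, hTS⟩
  have hcT := hlimcont T (Ioo_subset_Icc_self hTS')
  have hbdd : ∀ ε, BddBelow (crossingSet S T v ε (h ε)) :=
    fun ε => ⟨0, fun t ht => ht.1.1⟩
  have hne : ∀ᶠ ε in 𝓝[>] 0, (crossingSet S T v ε (h ε)).Nonempty :=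
    (eventually_add_mul_mem_crossingSet hv hTS' hunif hcT (lt_add_one _)).mono
      fun ε hε => ⟨_, hε⟩
  refine ⟨mem_nhdsGT_iff_exists_Ioo_subset.1 hne,
    tendsto_of_forall_eventually_ge_of_forall_eventually_le (fun a ha => ?_) (fun b hb => ?_)⟩
  · filter_upwards [hne, self_mem_nhdsWithin,
      eventually_add_mul_le_of_mem_crossingSet hv hunif hlimcont (Ioo_subset_Icc_self hTS') ha]
      with ε hne (hε : 0 < ε) hle
    have hτge : T + ε * a ≤ τ ε := (le_csInf hne hle).trans_eq (hτ ε hε).symm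
    rw [le_div_iff₀ hε]
    linarith
  · filter_upwards [eventually_add_mul_mem_crossingSet hv hTS' hunif hcT hb, self_mem_nhdsWithin]
      with ε hmem (hε : 0 < ε)
    have hτle : τ ε ≤ T + ε * b := (hτ ε hε).trans_le (csInf_le (hbdd ε) hmem)
    rw [div_le_iff₀ hε]
    linarith

/-- Deterministic skeleton of the exit-time correction (Theorems 4.1, 5.3): a curve
`γ^ε(t) = (t - T) v + ε h^ε(t)` crossing the level `0` transversally at time `T`
with speed `v > 0`, perturbed by fluctuations whose rescaled profiles `h^ε`
converge uniformly on `[0,S]` to `h`, has first crossing time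
`τ^ε = inf { t ∈ [0,S] : γ^ε(t) ≥ 0 }` satisfying
`(τ^ε - T)/ε → -h(T)/v` as `ε → 0⁺`. -/
theorem exit_time_correction_skeleton
    (S T v : ℝ) (hS : 0 < S) (hT : 0 < T) (hTS : T < S) (hv : 0 < v)
    (h : ℝ → ℝ → ℝ) (hcont : ∀ ε > (0:ℝ), ContinuousOn (h ε) (Set.Icc 0 S))
    (hlim : ℝ → ℝ) (hlimcont : ContinuousOn hlim (Set.Icc 0 S))
    (hunif : TendstoUniformlyOn h hlim (𝓝[>] (0:ℝ)) (Set.Icc 0 S))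
    (τ : ℝ → ℝ)
    (hτ : ∀ ε > (0:ℝ),
      τ ε = sInf {t | t ∈ Set.Icc (0:ℝ) S ∧ 0 ≤ (t - T) * v + ε * h ε t}) :
    (∃ ε₀ > (0:ℝ), ∀ ε ∈ Set.Ioo (0:ℝ) ε₀,
        {t | t ∈ Set.Icc (0:ℝ) S ∧ 0 ≤ (t - T) * v + ε * h ε t}.Nonempty) ∧
      Tendsto (fun ε => (τ ε - T) / ε) (𝓝[>] (0:ℝ)) (𝓝 (-hlim T / v)) :=
  exit_time_correction_skeleton_general S T v hT hTS hv h hlim hlimcont hunif τ hτ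
end

section
/- Let Q : ℝ → ℝ be twice continuously differentiable and periodic with period ρ > 0, let D > 0, and set K = ∫₀^ρ e^{−Q(y)/D} dy, K̂ = ∫₀^ρ e^{Q(y)/D} dy. Let ξ : ℝ → ℝ be any twice continuously differentiable ρ-periodic function satisfying D ξ''(y) − Q'(y) ξ'(y) = (ρ/K̂) e^{Q(y)/D} − ρ²/(K K̂) for all y. Then ∫₀^ρ ξ'(y) K^{−1} e^{−Q(y)/D} dy = (ρ/(D K K̂)) ∫₀^ρ (1 − (ρ/K̂) e^{Q(y)/D}) ( ∫₀^y (1 − (ρ/K) e^{−Q(z)/D}) dz ) dy. Consequently, the averaged correction drift J̄₁(x) = −V'(x)² ∫₀^ρ ξ'(y) K^{−1} e^{−Q(y)/D} dy equals the explicit double-integral formula of Proposition 5.1: J̄₁(x) = −(ρ/(K K̂ D)) |V'(x)|² ∫₀^ρ [ (1 − (ρ/K̂) e^{Q(y)/D}) ∫₀^y (1 − (ρ/K) e^{−Q(z)/D}) dz ] dy. -/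
/-!
Multiplying the Poisson equation for `ξ` by the integrating factor `e^{-Q/D}` turns it into
`(e^{-Q/D} ξ')' = (ρ/(D K̂)) (1 - (ρ/K) e^{-Q/D})`, so `φ := e^{-Q/D} ξ'` equals
`φ(0) + (ρ/(D K̂)) h` with `h(y) = ∫₀^y (1 - (ρ/K) e^{-Q/D})`. Periodicity of `ξ` gives
`0 = ∫₀^ρ ξ' = ∫₀^ρ e^{Q/D} φ`, which determines `φ(0)`; integrating `φ` over a period then
yields the formula.
-/

open Real intervalIntegral
open MeasureTheory (volume)

lemma hasDerivAt_exp_neg_div_mul {Q u : ℝ → ℝ} {q u' D y : ℝ} (hD : D ≠ 0)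
    (hQ : HasDerivAt Q q y) (hu : HasDerivAt u u' y) :
    HasDerivAt (fun t => exp (-Q t / D) * u t) (exp (-Q y / D) / D * (D * u' - q * u y)) y := by
  refine ((hQ.fun_neg.div_const D).exp.fun_mul hu).congr_deriv ?_
  field_simp
  ring

lemma hasDerivAt_exp_neg_div_mul_deriv_of_poisson {Q ξ : ℝ → ℝ} {ρ D K Khat : ℝ}
    (hD : D ≠ 0) (hQ : Differentiable ℝ Q) (hξ' : Differentiable ℝ (deriv ξ))
    (hξeq : ∀ y, D * deriv (deriv ξ) y - deriv Q y * deriv ξ y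
      = ρ / Khat * exp (Q y / D) - ρ ^ 2 / (K * Khat)) (y : ℝ) :
    HasDerivAt (fun t => exp (-Q t / D) * deriv ξ t)
      (ρ / (D * Khat) * (1 - ρ / K * exp (-Q y / D))) y := by
  convert hasDerivAt_exp_neg_div_mul hD (hQ y).hasDerivAt (hξ' y).hasDerivAt using 1
  have hinv : exp (-Q y / D) * exp (Q y / D) = 1 := by
    rw [← exp_add, neg_div, neg_add_cancel, exp_zero]
  rw [hξeq]
  linear_combination (-(ρ / (D * Khat))) * hinv

lemma integral_add_mul_eq_of_integral_mul_eq_zero {E h : ℝ → ℝ} {a b φ₀ c Ê : ℝ}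
    (hE : IntervalIntegrable E volume a b) (hh : IntervalIntegrable h volume a b)
    (hEh : IntervalIntegrable (fun y => E y * h y) volume a b)
    (hÊ : ∫ y in a..b, E y = Ê) (hÊ0 : Ê ≠ 0)
    (hzero : ∫ y in a..b, E y * (φ₀ + c * h y) = 0) :
    ∫ y in a..b, (φ₀ + c * h y) = c * ∫ y in a..b, (1 - (b - a) / Ê * E y) * h y := by
  have hsplit : ∫ y in a..b, E y * (φ₀ + c * h y) = Ê * φ₀ + c * ∫ y in a..b, E y * h y := by
    simp_rw [mul_add, mul_left_comm (E _) c]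
    rw [integral_add (hE.mul_const φ₀) (hEh.const_mul c), integral_mul_const,
      integral_const_mul, hÊ]
  have hφ₀ : φ₀ = -(c * ∫ y in a..b, E y * h y) / Ê := by
    rw [eq_div_iff hÊ0]
    linarith
  simp_rw [sub_mul, one_mul, mul_assoc]
  rw [integral_add intervalIntegrable_const (hh.const_mul c), integral_const, integral_const_mul,
    integral_sub hh (hEh.const_mul _), integral_const_mul, hφ₀, smul_eq_mul]
  field_simp
  ring

lemma eq_add_const_mul_integral_of_hasDerivAt {φ g : ℝ → ℝ} {c : ℝ}
    (hφ : ∀ y, HasDerivAt φ (c * g y) y) (hg : Continuous g) (a b : ℝ) :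
    φ b = φ a + c * ∫ y in a..b, g y := by
  rw [← integral_const_mul, integral_eq_sub_of_hasDerivAt (fun y _ => hφ y)
    ((continuous_const.mul hg).intervalIntegrable _ _)]
  ring

lemma Function.Periodic.integral_deriv_eq_zero {f : ℝ → ℝ} {ρ : ℝ} (hf : Function.Periodic f ρ)
    (hfd : Differentiable ℝ f) (hf' : Continuous (deriv f)) :
    ∫ y in (0:ℝ)..ρ, deriv f y = 0 := by
  rw [integral_deriv_eq_sub (fun y _ => hfd y) (hf'.intervalIntegrable _ _), hf.eq,
    sub_self]

theorem averaged_correction_drift_formula_general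
    (Q : ℝ → ℝ) (ρ D : ℝ) (hQ : ContDiff ℝ 2 Q)
    (hρ : 0 < ρ) (hD : 0 < D)
    (K Khat : ℝ)
    (hKhat : Khat = ∫ y in (0:ℝ)..ρ, Real.exp (Q y / D))
    (ξ : ℝ → ℝ) (hξ : ContDiff ℝ 2 ξ) (hξper : Function.Periodic ξ ρ)
    (hξeq : ∀ y : ℝ, D * deriv (deriv ξ) y - deriv Q y * deriv ξ y
      = (ρ / Khat) * Real.exp (Q y / D) - ρ ^ 2 / (K * Khat)) :
    (∫ y in (0:ℝ)..ρ, deriv ξ y * K⁻¹ * Real.exp (-Q y / D)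
        = (ρ / (D * K * Khat)) *
          ∫ y in (0:ℝ)..ρ, (1 - (ρ / Khat) * Real.exp (Q y / D)) *
            ∫ z in (0:ℝ)..y, (1 - (ρ / K) * Real.exp (-Q z / D))) ∧
      ∀ (V : ℝ → ℝ) (x : ℝ),
        -(deriv V x) ^ 2 * ∫ y in (0:ℝ)..ρ, deriv ξ y * K⁻¹ * Real.exp (-Q y / D)
          = -(ρ / (K * Khat * D)) * |deriv V x| ^ 2 *
            ∫ y in (0:ℝ)..ρ, (1 - (ρ / Khat) * Real.exp (Q y / D)) *
              ∫ z in (0:ℝ)..y, (1 - (ρ / K) * Real.exp (-Q z / D)) := by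
  have hQd : Differentiable ℝ Q := hQ.differentiable (by norm_num)
  have hξ'd : Differentiable ℝ (deriv ξ) := hξ.differentiable_deriv_two
  have hEc : Continuous fun y => exp (Q y / D) := by fun_prop
  have hgc : Continuous fun z => 1 - ρ / K * exp (-Q z / D) := by fun_prop
  have hhc : Continuous fun y => ∫ z in (0:ℝ)..y, (1 - ρ / K * exp (-Q z / D)) :=
    continuous_primitive (fun _ _ => hgc.intervalIntegrable _ _) 0
  have hKhat0 : Khat ≠ 0 :=
    hKhat ▸ (intervalIntegral_pos_of_pos (hEc.intervalIntegrable 0 ρ) (fun _ => exp_pos _) hρ).ne'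
  set c := ρ / (D * Khat)
  set φ : ℝ → ℝ := fun y => exp (-Q y / D) * deriv ξ y
  have hφ : ∀ y, φ y = φ 0 + c * ∫ z in (0:ℝ)..y, (1 - ρ / K * exp (-Q z / D)) :=
    eq_add_const_mul_integral_of_hasDerivAt
      (hasDerivAt_exp_neg_div_mul_deriv_of_poisson hD.ne' hQd hξ'd hξeq) hgc 0
  have hξ' : ∀ y, deriv ξ y = exp (Q y / D) * φ y := fun y => by
    simp only [φ, ← mul_assoc, ← exp_add, neg_div, add_neg_cancel, exp_zero, one_mul]
  have hzero : ∫ y in (0:ℝ)..ρ, exp (Q y / D) * (φ 0 + c * ∫ z in (0:ℝ)..y,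
      (1 - ρ / K * exp (-Q z / D))) = 0 := by
    simp_rw [← hφ, ← hξ']
    exact hξper.integral_deriv_eq_zero (hξ.differentiable (by norm_num))
      (hξ.continuous_deriv (by norm_num))
  have main : ∫ y in (0:ℝ)..ρ, deriv ξ y * K⁻¹ * exp (-Q y / D)
      = ρ / (D * K * Khat) * ∫ y in (0:ℝ)..ρ, (1 - ρ / Khat * exp (Q y / D)) *
          ∫ z in (0:ℝ)..y, (1 - ρ / K * exp (-Q z / D)) := by
    have hperiod := integral_add_mul_eq_of_integral_mul_eq_zero (hEc.intervalIntegrable 0 ρ)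
      (hhc.intervalIntegrable 0 ρ) ((hEc.mul hhc).intervalIntegrable 0 ρ) hKhat.symm hKhat0 hzero
    calc ∫ y in (0:ℝ)..ρ, deriv ξ y * K⁻¹ * exp (-Q y / D)
        = K⁻¹ * ∫ y in (0:ℝ)..ρ, φ y := by
          rw [← integral_const_mul]; congr 1; ext y; ring
      _ = _ := by
          rw [integral_congr fun y _ => hφ y, hperiod, sub_zero]
          ring
  exact ⟨main, fun V x => by rw [main, sq_abs]; ring⟩

/-- Explicit formula for the averaged correction drift `J̄₁` of Proposition 5.1:
if `ξ` is a `C²` `ρ`-periodic solution of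
`D ξ'' - Q' ξ' = (ρ/K̂) e^{Q/D} - ρ²/(K K̂)`, then
`∫₀^ρ ξ'(y) K⁻¹ e^{-Q(y)/D} dy
  = (ρ/(D K K̂)) ∫₀^ρ (1 - (ρ/K̂) e^{Q(y)/D}) (∫₀^y (1 - (ρ/K) e^{-Q(z)/D}) dz) dy`,
and consequently
`J̄₁(x) = -V'(x)² ∫₀^ρ ξ' K⁻¹ e^{-Q/D}
  = -(ρ/(K K̂ D)) |V'(x)|² ∫₀^ρ [(1 - (ρ/K̂) e^{Q(y)/D}) ∫₀^y (1 - (ρ/K) e^{-Q(z)/D}) dz] dy`. -/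
theorem averaged_correction_drift_formula
    (Q : ℝ → ℝ) (ρ D : ℝ) (hQ : ContDiff ℝ 2 Q) (hQper : Function.Periodic Q ρ)
    (hρ : 0 < ρ) (hD : 0 < D)
    (K Khat : ℝ)
    (hK : K = ∫ y in (0:ℝ)..ρ, Real.exp (-Q y / D))
    (hKhat : Khat = ∫ y in (0:ℝ)..ρ, Real.exp (Q y / D))
    (ξ : ℝ → ℝ) (hξ : ContDiff ℝ 2 ξ) (hξper : Function.Periodic ξ ρ)
    (hξeq : ∀ y : ℝ, D * deriv (deriv ξ) y - deriv Q y * deriv ξ y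
      = (ρ / Khat) * Real.exp (Q y / D) - ρ ^ 2 / (K * Khat)) :
    (∫ y in (0:ℝ)..ρ, deriv ξ y * K⁻¹ * Real.exp (-Q y / D)
        = (ρ / (D * K * Khat)) *
          ∫ y in (0:ℝ)..ρ, (1 - (ρ / Khat) * Real.exp (Q y / D)) *
            ∫ z in (0:ℝ)..y, (1 - (ρ / K) * Real.exp (-Q z / D))) ∧
      ∀ (V : ℝ → ℝ) (x : ℝ),
        -(deriv V x) ^ 2 * ∫ y in (0:ℝ)..ρ, deriv ξ y * K⁻¹ * Real.exp (-Q y / D)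
          = -(ρ / (K * Khat * D)) * |deriv V x| ^ 2 *
            ∫ y in (0:ℝ)..ρ, (1 - (ρ / Khat) * Real.exp (Q y / D)) *
              ∫ z in (0:ℝ)..y, (1 - (ρ / K) * Real.exp (-Q z / D)) :=
  averaged_correction_drift_formula_general Q ρ D hQ hρ hD K Khat hKhat ξ hξ hξper hξeq
end
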